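/- Let k be a field of characteristic 0, R a commutative unital k-algebra, and λ ∈ k. If ξ ∈ R is an invertible element satisfying ξ² = -λξ, and d_ξ : R → R is the map x ↦ ξ⁻¹x and P_ξ : R → R is the map x ↦ ξx, then d_ξ ∘ P_ξ = id_R; together with the facts that d_ξ is a degenerate quasi-idempotent differential operator of weight λ and P_ξ is a quasi-idempotent Rota-Baxter operator of weight λ, the triple (R, d_ξ, P_ξ) is a commutative degenerate quasi-idempotent differential Rota-Baxter k-algebra of weight λ. -/
import Mathlib


/-- If `ξ` is an invertible quasi-idempotent element of weight `lam` in a commutative algebra,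
then `d_ξ ∘ P_ξ = id`, `d_ξ` is a degenerate quasi-idempotent differential operator of weight
`lam` and `P_ξ` is a quasi-idempotent Rota-Baxter operator of weight `lam`; i.e.,
`(R, d_ξ, P_ξ)` is a commutative degenerate quasi-idempotent differential Rota-Baxter algebra. -/
theorem stmt9 {k R : Type*} [Field k] [CharZero k] [CommRing R] [Algebra k R]
    (lam : k) (ξ : Rˣ) (hξ : (ξ : R) ≠ 0)
    (hq : (ξ : R) * (ξ : R) = -lam • (ξ : R))
    (d P : R →ₗ[k] R) (hd : ∀ x, d x = (↑ξ⁻¹ : R) * x) (hP : ∀ x, P x = (ξ : R) * x) :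
    d ∘ₗ P = LinearMap.id ∧
      (∀ x y : R, d (x * y) = d x * y + x * d y + lam • (d x * d y)) ∧
      d ∘ₗ d = -lam⁻¹ • d ∧ d 1 ≠ 0 ∧
      (∀ x y : R, P x * P y = P (x * P y) + P (P x * y) + lam • P (x * y)) ∧
      P ∘ₗ P = -lam • P := by
  have hξ1 : (ξ : R) = (-lam) • (1 : R) := by
    have h1 : (ξ : R) = ((ξ : R) * ξ) * (↑ξ⁻¹ : R) := by
      rw [mul_assoc, Units.mul_inv, mul_one]
    rw [hq] at h1
    rw [h1, smul_mul_assoc, Units.mul_inv]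
  have hlam : lam ≠ 0 := by
    intro h
    apply hξ
    rw [hξ1, h, neg_zero, zero_smul]
  have hone : (1 : R) ≠ 0 := by
    intro h
    apply hξ
    rw [hξ1, h, smul_zero]
  have hinv : (↑ξ⁻¹ : R) = (-lam⁻¹) • (1 : R) := by
    have hc : (ξ : R) * ((-lam⁻¹) • (1 : R)) = 1 := by
      rw [hξ1, smul_mul_smul, one_mul, neg_mul_neg, mul_inv_cancel₀ hlam, one_smul]
    calc (↑ξ⁻¹ : R) = (↑ξ⁻¹ : R) * ((ξ : R) * ((-lam⁻¹) • (1 : R))) := by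
            rw [hc, mul_one]
      _ = ((↑ξ⁻¹ : R) * ξ) * ((-lam⁻¹) • (1 : R)) := by rw [mul_assoc]
      _ = (-lam⁻¹) • (1 : R) := by rw [Units.inv_mul, one_mul]
  have hd' : ∀ x, d x = (-lam⁻¹) • x := by
    intro x; rw [hd, hinv, smul_mul_assoc, one_mul]
  have hP' : ∀ x, P x = (-lam) • x := by
    intro x; rw [hP, hξ1, smul_mul_assoc, one_mul]
  refine ⟨?_, ?_, ?_, ?_, ?_, ?_⟩
  · ext x
    simp [hd', hP', smul_smul, neg_mul_neg, inv_mul_cancel₀ hlam]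
  · intro x y
    rw [hd' (x*y), hd' x, hd' y]
    rw [smul_mul_smul]
    rw [smul_smul]
    have : lam * (-lam⁻¹ * -lam⁻¹) = lam⁻¹ := by
      field_simp
    rw [this]
    rw [smul_mul_assoc, mul_smul_comm]
    have h2 : -lam⁻¹ = -lam⁻¹ + -lam⁻¹ + lam⁻¹ := by ring
    calc (-lam⁻¹) • (x * y) = (-lam⁻¹ + -lam⁻¹ + lam⁻¹) • (x * y) := by rw [← h2]
      _ = (-lam⁻¹) • (x * y) + (-lam⁻¹) • (x * y) + lam⁻¹ • (x * y) := by
            rw [add_smul, add_smul]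
  · ext x
    simp [hd', smul_smul]
  · rw [hd' 1]
    simp only [smul_eq_zero, ne_eq, not_or]
    exact ⟨by simpa using inv_ne_zero hlam, hone⟩
  · intro x y
    simp only [hP', smul_smul, mul_smul_comm, smul_mul_assoc]
    module
  · ext x
    simp [hP', smul_smul]
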